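/- arXiv:1005.0542 — 2 statements merged into one kernel-verified Lean document; each statement's English description precedes it below -/
import Mathlib

section
/- For every natural number α and every m ≥ 0, the function x ↦ e^{−x/2} L_m^α(x) satisfies d/dx ( e^{−x/2} L_m^α(x) ) = − e^{−x/2} ( (1/2) L_m^α(x) + Σ_{k=0}^{m−1} L_k^α(x) ) for all real x. -/
/-- The generalized Laguerre polynomial
`L_n^α(x) = ∑_{k=0}^{n} (−1)^k ⬝ C(n+α, n−k) ⬝ x^k / k!`. -/
noncomputable def lagPoly (α n : ℕ) (x : ℝ) : ℝ :=
  ∑ k ∈ Finset.range (n + 1),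
    (-1 : ℝ) ^ k * ((n + α).choose (n - k) : ℝ) * x ^ k / (Nat.factorial k : ℝ)

/-!
Pascal's rule on the coefficients gives `L_{n+1}^{α+1} = L_{n+1}^α + L_n^{α+1}`, hence
`∑_{k ≤ n} L_k^α = L_n^{α+1}`, while termwise differentiation gives `(L_{n+1}^α)' = -L_n^{α+1}`.
Together `(L_m^α)' = -∑_{k<m} L_k^α`, and the product rule with `(e^{-x/2})' = -e^{-x/2}/2` finishes.
-/

open Finset

@[simp]
lemma lagPoly_zero (α : ℕ) (x : ℝ) : lagPoly α 0 x = 1 := by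
  simp [lagPoly]

lemma lagPoly_succ_succ (α n : ℕ) (x : ℝ) :
    lagPoly (α + 1) (n + 1) x = lagPoly α (n + 1) x + lagPoly (α + 1) n x := by
  unfold lagPoly
  rw [sum_range_succ _ (n + 1), sum_range_succ _ (n + 1),
    add_right_comm (∑ k ∈ range (n + 1), _), ← sum_add_distrib]
  congr 1
  · refine sum_congr rfl fun k hk => ?_
    have hkn : n + 1 - k = n - k + 1 := by have := mem_range.mp hk; omega
    rw [hkn, show n + 1 + (α + 1) = n + 1 + α + 1 by ring, Nat.choose_succ_succ',
      show n + (α + 1) = n + 1 + α by ring]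
    push_cast
    ring
  · simp

lemma sum_range_lagPoly (α n : ℕ) (x : ℝ) :
    ∑ k ∈ range (n + 1), lagPoly α k x = lagPoly (α + 1) n x := by
  induction n with
  | zero => simp
  | succ n ih => rw [sum_range_succ, ih, lagPoly_succ_succ, add_comm]

lemma hasDerivAt_lagPoly_succ (α n : ℕ) (x : ℝ) :
    HasDerivAt (lagPoly α (n + 1)) (-lagPoly (α + 1) n x) x := by
  have h : HasDerivAt (lagPoly α (n + 1))
      (∑ k ∈ range (n + 2), (-1 : ℝ) ^ k * ((n + 1 + α).choose (n + 1 - k) : ℝ) *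
        (k * x ^ (k - 1)) / (k.factorial : ℝ)) x := by
    unfold lagPoly
    exact HasDerivAt.fun_sum fun k _ =>
      ((hasDerivAt_pow k x).const_mul _).div_const _
  refine h.congr_deriv ?_
  rw [sum_range_succ', lagPoly, ← sum_neg_distrib]
  simp only [CharP.cast_eq_zero, zero_mul, mul_zero, zero_div, add_zero]
  refine sum_congr rfl fun j _ => ?_
  rw [Nat.factorial_succ, show n + 1 - (j + 1) = n - j by omega,
    show n + 1 + α = n + (α + 1) by ring]
  push_cast
  field_simp
  ring

lemma hasDerivAt_lagPoly (α m : ℕ) (x : ℝ) :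
    HasDerivAt (lagPoly α m) (-∑ k ∈ range m, lagPoly α k x) x := by
  cases m with
  | zero => simpa [funext (lagPoly_zero α)] using hasDerivAt_const x (1 : ℝ)
  | succ n => simpa [sum_range_lagPoly] using hasDerivAt_lagPoly_succ α n x

/-- `d/dx ( e^{−x/2} L_m^α(x) ) = − e^{−x/2} ( (1/2) L_m^α(x) + ∑_{k=0}^{m−1} L_k^α(x) )`. -/
theorem deriv_exp_mul_lagPoly (α m : ℕ) (x : ℝ) :
    deriv (fun y : ℝ => Real.exp (-y / 2) * lagPoly α m y) x =
      - Real.exp (-x / 2) *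
        ((1 / 2) * lagPoly α m x + ∑ k ∈ Finset.range m, lagPoly α k x) := by
  have hexp : HasDerivAt (fun y : ℝ => Real.exp (-y / 2)) (Real.exp (-x / 2) * (-1 / 2)) x :=
    ((hasDerivAt_neg x).div_const 2).exp
  rw [(hexp.fun_mul (hasDerivAt_lagPoly α m x)).deriv]
  ring
end

section
/- For every natural number α, every real h > 0, and all natural numbers m, n, the scaled Laguerre functions t ↦ l_m^α(ht) form an orthonormal family in L²(0,∞): ∫_0^∞ l_m^α(ht) · l_n^α(ht) dt = 1 if m = n and 0 otherwise. -/
open MeasureTheory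

/-- The orthonormal Laguerre function of degree `m` and order `α`, evaluated at `h⬝t`:
`l_m^α(ht) = √( h ⬝ m! / (m+α)! ) ⬝ (ht)^{α/2} ⬝ e^{−ht/2} ⬝ L_m^α(ht)`. -/
noncomputable def lagFun (α : ℕ) (h : ℝ) (m : ℕ) (t : ℝ) : ℝ :=
  Real.sqrt (h * (Nat.factorial m : ℝ) / (Nat.factorial (m + α) : ℝ)) *
    (h * t) ^ ((α : ℝ) / 2) * Real.exp (-(h * t) / 2) * lagPoly α m (h * t)

/-!
The substitution `x = h t` reduces the claim to the weighted orthogonality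
`∫₀^∞ x^α e^{-x} L_m^α(x) L_n^α(x) dx = δ_{mn} (n+α)!/n!`. For `m ≤ n`, expand `L_m^α` into
monomials; since `∫₀^∞ x^p e^{-x} dx = p!`, the moment `∫₀^∞ x^{α+j} e^{-x} L_n^α(x) dx` equals
`(α+j)! ∑_k (-1)^k C(n+α, n-k) C(α+j+k, k)`. As `(-1)^k C(α+j+k, k) = C(-(α+j+1), k)`,
Chu–Vandermonde turns this sum into the generalized binomial coefficient `C(n-j-1, n)`, which is
`0` for `j < n` and `(-1)^n` for `j = n`.
-/

open Finset Set Real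
open scoped Nat

lemma Int.ringChoose_neg_natCast_sub_one (a k : ℕ) :
    Ring.choose (-(a : ℤ) - 1) k = (-1) ^ k * (a + k).choose k := by
  rw [neg_sub_left, Ring.choose_neg, Units.smul_def, Int.coe_negOnePow_natCast,
    show (1 : ℤ) + a + k - 1 = ((a + k : ℕ) : ℤ) by push_cast; ring, Ring.choose_natCast,
    smul_eq_mul]

lemma Int.ringChoose_natCast_sub_natCast_sub_one {n j : ℕ} (hj : j ≤ n) :
    Ring.choose ((n : ℤ) - j - 1) n = if j = n then (-1) ^ n else 0 := by
  split_ifs with hjn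
  · subst hjn
    simpa using Int.ringChoose_neg_natCast_sub_one 0 j
  · rw [show (n : ℤ) - j - 1 = ((n - j - 1 : ℕ) : ℤ) by omega, Ring.choose_natCast,
      Nat.choose_eq_zero_of_lt (by omega), Nat.cast_zero]

/-- Chu–Vandermonde for the upper indices `N` and `-(a + 1)`. -/
theorem Int.sum_range_neg_one_pow_mul_choose_mul_choose (N a n : ℕ) :
    ∑ k ∈ Finset.range (n + 1), (-1 : ℤ) ^ k * N.choose (n - k) * (a + k).choose k =
      Ring.choose ((N : ℤ) - a - 1) n := by
  rw [show (N : ℤ) - a - 1 = (-(a : ℤ) - 1) + N by ring, Ring.add_choose_eq n (Commute.all _ _),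
    Nat.sum_antidiagonal_eq_sum_range_succ
      (fun i j => Ring.choose (-(a : ℤ) - 1) i * Ring.choose (N : ℤ) j)]
  refine sum_congr rfl fun k _ => ?_
  rw [Int.ringChoose_neg_natCast_sub_one, Ring.choose_natCast]
  ring

lemma sum_range_neg_one_pow_mul_choose_add_mul_choose {α n j : ℕ} (hj : j ≤ n) :
    ∑ k ∈ range (n + 1), (-1 : ℝ) ^ k * (n + α).choose (n - k) * (α + j + k).choose k =
      if j = n then (-1) ^ n else 0 := by
  have key := Int.sum_range_neg_one_pow_mul_choose_mul_choose (n + α) (α + j) n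
  rw [show ((n + α : ℕ) : ℤ) - (α + j : ℕ) - 1 = n - j - 1 by push_cast; ring,
    Int.ringChoose_natCast_sub_natCast_sub_one hj] at key
  split_ifs at key ⊢ <;> exact_mod_cast key

lemma integrableOn_pow_mul_exp_neg (p : ℕ) :
    IntegrableOn (fun x : ℝ => x ^ p * exp (-x)) (Ioi 0) := by
  have h := GammaIntegral_convergent (show (0 : ℝ) < p + 1 by positivity)
  simp_rw [add_sub_cancel_right, rpow_natCast, mul_comm (exp _)] at h
  exact h

lemma integral_pow_mul_exp_neg (p : ℕ) :
    ∫ x in Ioi (0 : ℝ), x ^ p * exp (-x) = p ! := by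
  have h := Gamma_eq_integral (show (0 : ℝ) < p + 1 by positivity)
  simp_rw [Gamma_nat_eq_factorial, add_sub_cancel_right, rpow_natCast, mul_comm (exp _)] at h
  exact h.symm

lemma pow_mul_exp_neg_mul_lagPoly (p α n : ℕ) (x : ℝ) :
    x ^ p * exp (-x) * lagPoly α n x =
      ∑ k ∈ range (n + 1),
        (-1) ^ k * (n + α).choose (n - k) / k ! * (x ^ (p + k) * exp (-x)) := by
  rw [lagPoly, mul_sum]
  refine sum_congr rfl fun k _ => ?_
  ring

lemma integrableOn_pow_mul_exp_neg_mul_lagPoly (p α n : ℕ) :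
    IntegrableOn (fun x : ℝ => x ^ p * exp (-x) * lagPoly α n x) (Ioi 0) := by
  simp_rw [pow_mul_exp_neg_mul_lagPoly]
  exact integrable_finsetSum _ fun k _ => (integrableOn_pow_mul_exp_neg _).const_mul _

lemma integral_pow_mul_exp_neg_mul_lagPoly (p α n : ℕ) :
    ∫ x in Ioi (0 : ℝ), x ^ p * exp (-x) * lagPoly α n x =
      ∑ k ∈ range (n + 1), (-1) ^ k * (n + α).choose (n - k) / k ! * ((p + k)! : ℝ) := by
  simp_rw [pow_mul_exp_neg_mul_lagPoly]
  rw [integral_finsetSum _ fun k _ => (integrableOn_pow_mul_exp_neg _).const_mul _]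
  simp_rw [integral_const_mul, integral_pow_mul_exp_neg]

theorem integral_pow_add_mul_exp_neg_mul_lagPoly {α n j : ℕ} (hj : j ≤ n) :
    ∫ x in Ioi (0 : ℝ), x ^ (α + j) * exp (-x) * lagPoly α n x =
      if j = n then (-1) ^ n * ((n + α)! : ℝ) else 0 := by
  rw [integral_pow_mul_exp_neg_mul_lagPoly]
  calc ∑ k ∈ range (n + 1), (-1) ^ k * (n + α).choose (n - k) / k ! * ((α + j + k)! : ℝ)
      = (α + j)! * ∑ k ∈ range (n + 1),
          (-1 : ℝ) ^ k * (n + α).choose (n - k) * (α + j + k).choose k := by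
        rw [mul_sum]
        refine sum_congr rfl fun k _ => ?_
        rw [← Nat.add_choose_mul_factorial_mul_factorial (α + j) k]
        push_cast
        field_simp
    _ = if j = n then (-1) ^ n * ((n + α)! : ℝ) else 0 := by
        rw [sum_range_neg_one_pow_mul_choose_add_mul_choose hj]
        split_ifs with hjn
        · rw [hjn, add_comm, mul_comm]
        · rw [mul_zero]

theorem integral_pow_mul_exp_neg_mul_lagPoly_mul_lagPoly_of_le (α : ℕ) {m n : ℕ} (hmn : m ≤ n) :
    ∫ x in Ioi (0 : ℝ), x ^ α * exp (-x) * (lagPoly α m x * lagPoly α n x) =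
      if m = n then ((n + α)! : ℝ) / n ! else 0 := by
  have expand : ∀ x : ℝ, x ^ α * exp (-x) * (lagPoly α m x * lagPoly α n x) =
      ∑ j ∈ range (m + 1), (-1) ^ j * (m + α).choose (m - j) / j ! *
        (x ^ (α + j) * exp (-x) * lagPoly α n x) := by
    intro x
    rw [lagPoly.eq_1 α m, sum_mul, mul_sum]
    refine sum_congr rfl fun j _ => ?_
    ring
  simp_rw [expand]
  rw [integral_finsetSum _ fun j _ =>
    (integrableOn_pow_mul_exp_neg_mul_lagPoly (α + j) α n).const_mul _]
  simp_rw [integral_const_mul]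
  rw [sum_congr rfl fun j hj => by
    rw [integral_pow_add_mul_exp_neg_mul_lagPoly (by simp at hj; omega)]]
  simp_rw [mul_ite, mul_zero, sum_ite_eq', Finset.mem_range]
  rcases hmn.eq_or_lt with rfl | hlt
  · rw [if_pos (lt_add_one m), if_pos rfl, Nat.sub_self, Nat.choose_zero_right, Nat.cast_one,
      mul_one, ← mul_assoc, div_mul_eq_mul_div, ← pow_add, Even.neg_one_pow ⟨m, rfl⟩,
      div_mul_eq_mul_div, one_mul]
  · rw [if_neg (by omega), if_neg hlt.ne]

theorem integral_pow_mul_exp_neg_mul_lagPoly_mul_lagPoly (α m n : ℕ) :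
    ∫ x in Ioi (0 : ℝ), x ^ α * exp (-x) * (lagPoly α m x * lagPoly α n x) =
      if m = n then ((m + α)! : ℝ) / m ! else 0 := by
  rcases le_total m n with hmn | hnm
  · rw [integral_pow_mul_exp_neg_mul_lagPoly_mul_lagPoly_of_le α hmn]
    split_ifs with h <;> simp only [h]
  · simp_rw [mul_comm (lagPoly α m _), eq_comm (a := m)]
    exact integral_pow_mul_exp_neg_mul_lagPoly_mul_lagPoly_of_le α hnm

lemma lagFun_mul_lagFun (α : ℕ) (h : ℝ) (m n : ℕ) {t : ℝ} (ht : 0 ≤ h * t) :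
    lagFun α h m t * lagFun α h n t =
      √(h * m ! / (m + α)!) * √(h * n ! / (n + α)!) *
        ((h * t) ^ α * exp (-(h * t)) * (lagPoly α m (h * t) * lagPoly α n (h * t))) := by
  have hpow : (h * t) ^ ((α : ℝ) / 2) * (h * t) ^ ((α : ℝ) / 2) = (h * t) ^ α := by
    rw [← rpow_add_of_nonneg ht (by positivity) (by positivity), add_halves, rpow_natCast]
  have hexp : exp (-(h * t) / 2) * exp (-(h * t) / 2) = exp (-(h * t)) := by
    rw [← exp_add, add_halves]
  rw [lagFun, lagFun, ← hpow, ← hexp]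
  ring

/-- Orthonormality of the scaled Laguerre functions in `L²(0,∞)`:
`∫_0^∞ l_m^α(ht) ⬝ l_n^α(ht) dt = 1` if `m = n` and `0` otherwise. -/
theorem lagFun_orthonormal (α : ℕ) (h : ℝ) (hh : 0 < h) (m n : ℕ) :
    ∫ t in Set.Ioi (0 : ℝ), lagFun α h m t * lagFun α h n t =
      if m = n then 1 else 0 := by
  rw [setIntegral_congr_fun measurableSet_Ioi fun t ht =>
      lagFun_mul_lagFun α h m n (mul_pos hh ht).le, integral_const_mul,
    integral_comp_mul_left_Ioi (fun x => x ^ α * exp (-x) * (lagPoly α m x * lagPoly α n x)) 0 hh,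
    mul_zero, integral_pow_mul_exp_neg_mul_lagPoly_mul_lagPoly]
  split_ifs with hmn
  · subst hmn
    rw [mul_self_sqrt (by positivity), smul_eq_mul]
    field_simp
  · simp
end
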